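/- For all integers 0 ≤ r ≤ n, one has bar([n]!_{q,π}) · [r]!_{q,π} · [n−r]!_{q,π} = π^{r(n−r)} · [n]!_{q,π} · bar([r]!_{q,π}) · bar([n−r]!_{q,π}) in R. This is the identity bar( [n choose r]_{q,π} ) = π^{r(n−r)} · [n choose r]_{q,π} for the (q,π)-quantum binomial coefficient [n choose r]_{q,π} = [n]!_{q,π}/([r]!_{q,π}[n−r]!_{q,π}), with denominators cleared. -/
import Mathlib


/-- The `(q,π)`-quantum integer `[n]_{q,π} = ∑_{k=0}^{n-1} π^k q^{n-1-2k}`. -/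
def qint {R : Type*} [CommRing R] (q π : Rˣ) (n : ℕ) : R :=
  ∑ k ∈ Finset.range n, (π : R) ^ k * ((q ^ ((n : ℤ) - 1 - 2 * (k : ℤ)) : Rˣ) : R)

/-- The `(q,π)`-quantum factorial `[n]!_{q,π} = [n]_{q,π}[n−1]_{q,π}⋯[1]_{q,π}`. -/
def qfact {R : Type*} [CommRing R] (q π : Rˣ) (n : ℕ) : R :=
  ∏ m ∈ Finset.range n, qint q π (m + 1)

lemma bar_unit_zpow {R : Type*} [CommRing R] (q : Rˣ) (bar : R →+* R)
    (hbarq : bar (q : R) = ((q⁻¹ : Rˣ) : R)) (z : ℤ) :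
    bar ((q ^ z : Rˣ) : R) = ((q ^ (-z) : Rˣ) : R) := by
  have h : (Units.map (bar : R →* R)) q = q⁻¹ := Units.ext (by simpa using hbarq)
  have h2 : (Units.map (bar : R →* R)) (q ^ z) = q ^ (-z) := by
    rw [map_zpow, h, zpow_neg, inv_zpow]
  calc bar ((q ^ z : Rˣ) : R) = (((Units.map (bar : R →* R)) (q ^ z) : Rˣ) : R) := rfl
    _ = ((q ^ (-z) : Rˣ) : R) := by rw [h2]

lemma pi_pow_parity {R : Type*} [CommRing R] (π : Rˣ) (hπ : π ^ 2 = 1) (a b : ℕ) :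
    (π : R) ^ (a + 2 * b) = (π : R) ^ a := by
  have h : (π : R) ^ 2 = 1 := by
    have := congrArg (Units.val) hπ; simpa using this
  rw [pow_add, pow_mul, h, one_pow, mul_one]

lemma bar_qint {R : Type*} [CommRing R] (q π : Rˣ) (hπ : π ^ 2 = 1)
    (bar : R →+* R) (hbarq : bar (q : R) = ((q⁻¹ : Rˣ) : R)) (hbarπ : bar (π : R) = (π : R))
    (m : ℕ) :
    bar (qint q π m) = (π : R) ^ (m - 1) * qint q π m := by
  unfold qint
  rw [map_sum, Finset.mul_sum]
  rw [← Finset.sum_range_reflect (fun k =>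
    (π : R) ^ (m - 1) * ((π : R) ^ k * ((q ^ ((m : ℤ) - 1 - 2 * (k : ℤ)) : Rˣ) : R))) m]
  refine Finset.sum_congr rfl fun k hk => ?_
  have hkm : k < m := Finset.mem_range.mp hk
  rw [map_mul, map_pow, hbarπ, bar_unit_zpow q bar hbarq]
  have hcast : ((m - 1 - k : ℕ) : ℤ) = (m : ℤ) - 1 - k := by omega
  have hexp : -((m : ℤ) - 1 - 2 * (k : ℤ)) = (m : ℤ) - 1 - 2 * ((m - 1 - k : ℕ) : ℤ) := by
    rw [hcast]; ring
  rw [hexp]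
  have hpow : (π : R) ^ k = (π : R) ^ (m - 1) * (π : R) ^ (m - 1 - k) := by
    rw [← pow_add]
    have : (m - 1) + (m - 1 - k) = k + 2 * (m - 1 - k) := by omega
    rw [this, pi_pow_parity π hπ]
  rw [hpow]; ring

lemma bar_qfact {R : Type*} [CommRing R] (q π : Rˣ) (hπ : π ^ 2 = 1)
    (bar : R →+* R) (hbarq : bar (q : R) = ((q⁻¹ : Rˣ) : R)) (hbarπ : bar (π : R) = (π : R))
    (n : ℕ) :
    bar (qfact q π n) = (π : R) ^ (∑ m ∈ Finset.range n, m) * qfact q π n := by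
  induction n with
  | zero => simp [qfact]
  | succ n ih =>
    have hf : qfact q π (n + 1) = qfact q π n * qint q π (n + 1) :=
      Finset.prod_range_succ _ n
    rw [hf, map_mul, ih, bar_qint q π hπ bar hbarq hbarπ (n + 1),
      Finset.sum_range_succ, pow_add]
    simp only [Nat.add_sub_cancel]
    ring

lemma sum_range_id_add (r s : ℕ) :
    (∑ m ∈ Finset.range (r + s), m)
      = (∑ m ∈ Finset.range r, m) + (∑ m ∈ Finset.range s, m) + r * s := by
  induction s with
  | zero => simp
  | succ s ih =>
    have h : r + (s + 1) = (r + s) + 1 := by omega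
    rw [h, Finset.sum_range_succ, ih, Finset.sum_range_succ, Nat.mul_succ]
    omega

/-- For `0 ≤ r ≤ n`:
`bar([n]!)·[r]!·[n−r]! = π^{r(n−r)}·[n]!·bar([r]!)·bar([n−r]!)`, the denominator-cleared
form of `bar([n choose r]_{q,π}) = π^{r(n−r)}·[n choose r]_{q,π}`. -/
theorem bar_qbinom {R : Type*} [CommRing R] (q π : Rˣ) (hπ : π ^ 2 = 1)
    (bar : R →+* R) (hbarq : bar (q : R) = ((q⁻¹ : Rˣ) : R)) (hbarπ : bar (π : R) = (π : R))
    (r n : ℕ) (hrn : r ≤ n) :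
    bar (qfact q π n) * qfact q π r * qfact q π (n - r)
      = (π : R) ^ (r * (n - r)) * qfact q π n * bar (qfact q π r) * bar (qfact q π (n - r)) := by
  obtain ⟨s, rfl⟩ : ∃ s, n = r + s := ⟨n - r, by omega⟩
  have hs : r + s - r = s := by omega
  rw [hs, bar_qfact q π hπ bar hbarq hbarπ (r + s), bar_qfact q π hπ bar hbarq hbarπ r,
    bar_qfact q π hπ bar hbarq hbarπ s, sum_range_id_add, pow_add, pow_add]
  ring
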